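/- arXiv:1910.11254 — 2 statements merged into one kernel-verified Lean document; each statement's English description precedes it below -/
import Mathlib

section
/- If a partially ordered vector space X contains at least one net catching element, then every order unit of X is net catching. -/
/-- A net decreases to `x`: antitone with infimum `x`. -/
def DecrTo {ι X : Type*} [Preorder ι] [Preorder X] (f : ι → X) (x : X) : Prop :=
  Antitone f ∧ IsGLB (Set.range f) x

/-- `y` is a net catching element. -/
def NetCatchingElem {X : Type*} [Preorder X] [Zero X] (y : X) : Prop :=
  ∀ (ι : Type) [Preorder ι], Nonempty ι → Directed (· ≤ ·) (id : ι → ι) →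
    ∀ f : ι → X, DecrTo f (0 : X) → ∃ α : ι, f α ≤ y

/-- `u ∈ X₊` is an order unit: every `x` satisfies `x ≤ n • u` for some `n`. -/
def OrderUnit {X : Type*} [AddCommMonoid X] [PartialOrder X] (u : X) : Prop :=
  0 ≤ u ∧ ∀ x : X, ∃ n : ℕ, x ≤ n • u

theorem DecrTo.map_orderIso {ι X Y : Type*} [Preorder ι] [Preorder X] [Preorder Y]
    {f : ι → X} {x : X} (hf : DecrTo f x) (e : X ≃o Y) : DecrTo (e ∘ f) (e x) :=
  ⟨e.monotone.comp_antitone hf.1, by rw [Set.range_comp]; exact e.isGLB_image'.2 hf.2⟩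

section Module

variable {𝕜 X : Type*} [Semifield 𝕜] [LinearOrder 𝕜] [IsStrictOrderedRing 𝕜]
  [AddCommMonoid X] [PartialOrder X] [Module 𝕜 X] [PosSMulStrictMono 𝕜 X]

theorem DecrTo.const_smul {ι : Type*} [Preorder ι] {f : ι → X} (hf : DecrTo f 0) {c : 𝕜}
    (hc : 0 < c) : DecrTo (fun i => c • f i) 0 := by
  simpa [Function.comp_def] using hf.map_orderIso (OrderIso.smulRight hc)

/-- Catching the rescaled net `c • f` below `y` catches `f` below `u`. -/
theorem NetCatchingElem.of_le_smul {y u : X} (hy : NetCatchingElem y) {c : 𝕜} (hc : 0 < c)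
    (hyu : y ≤ c • u) : NetCatchingElem u := by
  intro ι _ hne hdir f hf
  obtain ⟨α, hα⟩ := hy ι hne hdir _ (hf.const_smul hc)
  exact ⟨α, le_of_smul_le_smul_left (hα.trans hyu) hc⟩

end Module

theorem OrderUnit.exists_pos_le_smul {𝕜 X : Type*} [Semiring 𝕜] [PartialOrder 𝕜]
    [IsOrderedRing 𝕜] [Nontrivial 𝕜] [AddCommMonoid X] [PartialOrder X] [IsOrderedAddMonoid X]
    [Module 𝕜 X] {u : X} (hu : OrderUnit u) (x : X) : ∃ c : 𝕜, 0 < c ∧ x ≤ c • u := by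
  obtain ⟨n, hn⟩ := hu.2 x
  refine ⟨(n + 1 : ℕ), Nat.cast_pos.2 n.succ_pos, ?_⟩
  calc x ≤ n • u := hn
    _ ≤ (n + 1) • u := by rw [succ_nsmul]; exact le_add_of_nonneg_right hu.1
    _ = ((n + 1 : ℕ) : 𝕜) • u := (Nat.cast_smul_eq_nsmul 𝕜 _ u).symm

/-- If a partially ordered vector space contains a net catching element, then
every order unit is net catching. -/
theorem stmt3 {X : Type*} [AddCommGroup X] [PartialOrder X] [IsOrderedAddMonoid X] [Module ℝ X] [PosSMulStrictMono ℝ X]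
    (h : ∃ y : X, NetCatchingElem y) :
    ∀ u : X, OrderUnit u → NetCatchingElem u := by
  obtain ⟨y, hy⟩ := h
  intro u hu
  obtain ⟨c, hc, hyc⟩ := hu.exists_pos_le_smul (𝕜 := ℝ) y
  exact hy.of_le_smul hc hyc
end

section
/- If X is a directed Archimedean partially ordered vector space, then every net catching element of X is an order unit. -/
/-
A net catching element `y` catches the constant net `0`, so `y ≥ 0`. Given `x`, pick
`z ≥ x, 0` by directedness; Archimedeanity makes `z / (n + 1) ↓ 0`, so `z / (n + 1) ≤ y`
for some `n`, i.e. `x ≤ z ≤ (n + 1) • y`.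
-/

theorem decrTo_const {ι X : Type*} [Preorder ι] [Nonempty ι] [Preorder X] (x : X) :
    DecrTo (fun _ : ι => x) x :=
  ⟨antitone_const, by rw [Set.range_const]; exact isGLB_singleton⟩

namespace NetCatchingElem

variable {X : Type*} [Preorder X] [Zero X] {y : X}

theorem exists_le_of_decrTo_nat (hy : NetCatchingElem y) {f : ℕ → X} (hf : DecrTo f 0) :
    ∃ n, f n ≤ y :=
  hy ℕ ⟨0⟩ directed_id f hf

theorem nonneg (hy : NetCatchingElem y) : 0 ≤ y :=
  (hy.exists_le_of_decrTo_nat (decrTo_const 0)).choose_spec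

end NetCatchingElem

section Archimedean

variable {X : Type*} [AddCommGroup X] [PartialOrder X] [IsOrderedAddMonoid X] [Module ℝ X]
  [PosSMulStrictMono ℝ X]

theorem decrTo_inv_succ_smul (harch : ∀ x y : X, (∀ n : ℕ, n • x ≤ y) → x ≤ 0)
    {z : X} (hz : 0 ≤ z) : DecrTo (fun n : ℕ => ((n : ℝ) + 1)⁻¹ • z) 0 := by
  refine ⟨fun m n hmn => smul_le_smul_of_nonneg_right ?_ hz, ?_, fun w hw => harch w z ?_⟩
  · gcongr
  · rintro _ ⟨n, rfl⟩
    exact smul_nonneg (by positivity) hz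
  · rintro (_ | n)
    · simpa using hz
    · have hwn : w ≤ ((n : ℝ) + 1)⁻¹ • z := hw ⟨n, rfl⟩
      rw [le_inv_smul_iff_of_pos (by positivity)] at hwn
      exact_mod_cast hwn

end Archimedean

theorem stmt4_general {X : Type*} [AddCommGroup X] [PartialOrder X] [IsOrderedAddMonoid X] [Module ℝ X] [PosSMulStrictMono ℝ X]
    (hdir : ∀ x y : X, ∃ z : X, x ≤ z ∧ y ≤ z)
    (harch : ∀ x y : X, (∀ n : ℕ, n • x ≤ y) → x ≤ 0)
    (y : X) (hy : NetCatchingElem y) : OrderUnit y := by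
  refine ⟨hy.nonneg, fun x => ?_⟩
  obtain ⟨z, hxz, hz⟩ := hdir x 0
  obtain ⟨n, hn⟩ := hy.exists_le_of_decrTo_nat (decrTo_inv_succ_smul harch hz)
  rw [inv_smul_le_iff_of_pos (by positivity)] at hn
  refine ⟨n + 1, hxz.trans ?_⟩
  exact_mod_cast hn

/-- In a directed Archimedean partially ordered vector space, every net
catching element is an order unit. -/
theorem stmt4 {X : Type*} [AddCommGroup X] [PartialOrder X] [IsOrderedAddMonoid X] [Module ℝ X] [PosSMulStrictMono ℝ X] [PosSMulReflectLT ℝ X]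
    (hdir : ∀ x y : X, ∃ z : X, x ≤ z ∧ y ≤ z)
    (harch : ∀ x y : X, (∀ n : ℕ, n • x ≤ y) → x ≤ 0)
    (y : X) (hy : NetCatchingElem y) : OrderUnit y :=
  stmt4_general hdir harch y hy
end
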